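/- In any triangle with sides a, b, c, exradii r_a, r_b, r_c, circumradius R, and inradius r, a/r_a + b/r_b + c/r_c ≥ 2·√(3 + 4(R − 2r)/(4R + r)). -/

import Mathlib

/-!
In the Ravi variables `x = s - a`, `y = s - b`, `z = s - c`, put `p = x + y + z = s`,
`q = xy + yz + zx`, `t = xyz`, so that `S² = pt`. Then `∑ a / r_a = 2q / S`,
`4R + r = pq / S` and `4(R - 2r) = (pq - 9t) / S`, so the radicand equals `4 - 9t / (pq)`.
Squaring, the inequality becomes `4pqt ≤ q³ + 9t²`, which is Schur's inequality for `xy, yz, zx`.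
-/

theorem schur_inequality_elementary {u v w : ℝ} (hu : 0 ≤ u) (hv : 0 ≤ v) (hw : 0 ≤ w) :
    4 * (u + v + w) * (u * v + v * w + w * u) ≤ (u + v + w) ^ 3 + 9 * (u * v * w) := by
  rcases le_total u v with h1 | h1 <;> rcases le_total v w with h2 | h2 <;>
    rcases le_total u w with h3 | h3 <;>
    nlinarith [mul_nonneg (mul_nonneg hu hv) hw, mul_nonneg hu (mul_self_nonneg (v - w)),
      mul_nonneg hv (mul_self_nonneg (u - w)), mul_nonneg hw (mul_self_nonneg (u - v))]

theorem four_sub_div_le_sq_div {x y z : ℝ} (hx : 0 < x) (hy : 0 < y) (hz : 0 < z) :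
    4 - 9 * (x * y * z) / ((x + y + z) * (x * y + y * z + z * x))
      ≤ (x * y + y * z + z * x) ^ 2 / ((x + y + z) * (x * y * z)) := by
  have schur := schur_inequality_elementary (mul_pos hx hy).le (mul_pos hy hz).le
    (mul_pos hz hx).le
  rw [sub_le_iff_le_add, div_add_div _ _ (by positivity) (by positivity),
    le_div_iff₀ (by positivity)]
  nlinarith [schur]

theorem sum_side_div_exradius (a b c s S : ℝ) (hs : s = (a + b + c) / 2) :
    a / (S / (s - a)) + b / (S / (s - b)) + c / (S / (s - c))
      = 2 * ((s - a) * (s - b) + (s - b) * (s - c) + (s - c) * (s - a)) / S := by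
  simp only [div_div_eq_mul_div, ← add_div]
  congr 1
  subst hs
  ring

theorem four_mul_circumradius_add_inradius {a b c s S : ℝ} (hs : s = (a + b + c) / 2)
    (hS : S ^ 2 = s * (s - a) * (s - b) * (s - c)) (hs0 : s ≠ 0) (hS0 : S ≠ 0) :
    4 * (a * b * c / (4 * S)) + S / s
      = s * ((s - a) * (s - b) + (s - b) * (s - c) + (s - c) * (s - a)) / S := by
  field_simp
  rw [hS]
  subst hs
  ring

theorem four_mul_circumradius_sub_two_mul_inradius {a b c s S : ℝ} (hs : s = (a + b + c) / 2)
    (hS : S ^ 2 = s * (s - a) * (s - b) * (s - c)) (hs0 : s ≠ 0) (hS0 : S ≠ 0) :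
    4 * (a * b * c / (4 * S) - 2 * (S / s))
      = (s * ((s - a) * (s - b) + (s - b) * (s - c) + (s - c) * (s - a))
          - 9 * ((s - a) * (s - b) * (s - c))) / S := by
  field_simp
  rw [hS]
  subst hs
  ring

theorem application_five_general (a b c : ℝ) (hA : a < b + c) (hB : b < c + a) (hC : c < a + b) (s S : ℝ) (hs : s = (a + b + c) / 2)
    (hS : S = Real.sqrt (s * (s - a) * (s - b) * (s - c))) (R : ℝ) (hR : R = a * b * c / (4 * S)) (r : ℝ) (hr : r = S / s)
    (ra rb rc : ℝ) (hra : ra = S / (s - a)) (hrb : rb = S / (s - b))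
    (hrc : rc = S / (s - c)) :
    a / ra + b / rb + c / rc
      ≥ 2 * Real.sqrt (3 + 4 * (R - 2 * r) / (4 * R + r)) := by
  have hx : 0 < s - a := by linarith
  have hy : 0 < s - b := by linarith
  have hz : 0 < s - c := by linarith
  have hs0 : 0 < s := by linarith
  have hS0 : 0 < S := by rw [hS]; positivity
  have hS2 : S ^ 2 = s * (s - a) * (s - b) * (s - c) := by rw [hS, Real.sq_sqrt (by positivity)]
  subst hR hr hra hrb hrc
  rw [sum_side_div_exradius a b c s S hs,
    four_mul_circumradius_sub_two_mul_inradius hs hS2 hs0.ne' hS0.ne',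
    four_mul_circumradius_add_inradius hs hS2 hs0.ne' hS0.ne', div_div_div_cancel_right₀ hS0.ne',
    ge_iff_le, mul_div_assoc]
  refine mul_le_mul_of_nonneg_left ?_ zero_le_two
  rw [Real.sqrt_le_left (by positivity), div_pow, hS2]
  have hsum : s = (s - a) + (s - b) + (s - c) := by linarith
  set x := s - a
  set y := s - b
  set z := s - c
  have hq : 0 < x * y + y * z + z * x := by positivity
  rw [hsum]
  convert four_sub_div_le_sq_div hx hy hz using 1
  · field_simp
    ring
  · ring

theorem application_five (a b c : ℝ) (ha : 0 < a) (hb : 0 < b) (hc : 0 < c)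
    (hA : a < b + c) (hB : b < c + a) (hC : c < a + b) (s S : ℝ) (hs : s = (a + b + c) / 2)
    (hS : S = Real.sqrt (s * (s - a) * (s - b) * (s - c))) (R : ℝ) (hR : R = a * b * c / (4 * S)) (r : ℝ) (hr : r = S / s)
    (ra rb rc : ℝ) (hra : ra = S / (s - a)) (hrb : rb = S / (s - b))
    (hrc : rc = S / (s - c)) :
    a / ra + b / rb + c / rc
      ≥ 2 * Real.sqrt (3 + 4 * (R - 2 * r) / (4 * R + r)) :=
  application_five_general a b c hA hB hC s S hs hS R hR r hr ra rb rc hra hrb hrc
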